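/- arXiv:1810.05103 — 2 statements merged into one kernel-verified Lean document; each statement's English description precedes it below -/
import Mathlib

section
/- A linear [n,k]_q code C with generator matrix G satisfies C ∩ C^⊥ = {0} (i.e., C is linear complementary dual) if and only if the k×k matrix G·G^t is invertible. -/
open Matrix

variable {F : Type*} [Field F] [Fintype F]

/-- The Euclidean dual of a linear code `C ⊆ F^n`. -/
def dualCode {n : ℕ} (C : Submodule F (Fin n → F)) : Submodule F (Fin n → F) where
  carrier := {u | ∀ c ∈ C, dotProduct u c = 0}
  add_mem' := by
    intro a b ha hb c hc
    simp [add_dotProduct, ha c hc, hb c hc]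
  zero_mem' := by
    intro c hc
    simp
  smul_mem' := by
    intro r a ha c hc
    simp [smul_dotProduct, ha c hc]

/-- `G` is a generator matrix of the code `C`: its rows form a basis of `C`. -/
def IsGenMat {n k : ℕ} (C : Submodule F (Fin n → F)) (G : Matrix (Fin k) (Fin n) F) : Prop :=
  LinearIndependent F (fun i => G i) ∧ Submodule.span F (Set.range fun i => G i) = C

/-! The code `C` is the image of the injective map `x ↦ x G`, and `C^⊥` is the kernel of
`u ↦ G u`. Hence `C ∩ C^⊥` is the image of the kernel of `x ↦ G (Gᵀ x) = (G Gᵀ) x`, which is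
trivial exactly when `G Gᵀ` is invertible. -/

theorem LinearMap.range_inf_ker_eq_bot_iff {R M N P : Type*} [Semiring R] [AddCommMonoid M]
    [AddCommMonoid N] [AddCommMonoid P] [Module R M] [Module R N] [Module R P]
    {f : M →ₗ[R] N} (hf : Function.Injective f) (g : N →ₗ[R] P) :
    LinearMap.range f ⊓ LinearMap.ker g = ⊥ ↔ LinearMap.ker (g ∘ₗ f) = ⊥ := by
  rw [← Submodule.map_comap_eq, ← LinearMap.ker_comp, ← Submodule.map_bot f]
  exact (Submodule.map_injective_of_injective hf).eq_iff

section

variable {K : Type*} [Field K]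

theorem dualCode_span_rows {n k : ℕ} (G : Matrix (Fin k) (Fin n) K) :
    dualCode (Submodule.span K (Set.range G.row)) = LinearMap.ker G.mulVecLin := by
  ext u
  calc u ∈ dualCode (Submodule.span K (Set.range G.row))
      ↔ Submodule.span K (Set.range G.row) ≤ LinearMap.ker (dotProductBilin K K u) := Iff.rfl
    _ ↔ ∀ i, u ⬝ᵥ G i = 0 := by
      simp only [Submodule.span_le, Set.range_subset_iff]
      rfl
    _ ↔ u ∈ LinearMap.ker G.mulVecLin := by
      simp only [LinearMap.mem_ker, mulVecLin_apply, funext_iff, mulVec, dotProduct_comm u]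
      rfl

namespace IsGenMat

variable {n k : ℕ} {C : Submodule K (Fin n → K)} {G : Matrix (Fin k) (Fin n) K}

theorem range_vecMulLinear (hG : IsGenMat C G) : LinearMap.range G.vecMulLinear = C :=
  (_root_.range_vecMulLinear G).trans hG.2

theorem dualCode_eq_ker (hG : IsGenMat C G) : dualCode C = LinearMap.ker G.mulVecLin := by
  rw [← hG.2]
  exact dualCode_span_rows G

end IsGenMat

end

theorem LCD_iff_GGt_invertible_general {n k : ℕ}
    (C : Submodule F (Fin n → F))
    (G : Matrix (Fin k) (Fin n) F) (hG : IsGenMat C G) :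
    C ⊓ dualCode C = ⊥ ↔ IsUnit (G * G.transpose) := by
  have hcomp : G.mulVecLin ∘ₗ G.vecMulLinear = (G * Gᵀ).mulVecLin := by
    ext1 x
    simp
  rw [hG.dualCode_eq_ker, ← hG.range_vecMulLinear,
    LinearMap.range_inf_ker_eq_bot_iff (vecMul_injective_iff.2 hG.1), hcomp,
    LinearMap.ker_eq_bot, coe_mulVecLin, mulVec_injective_iff_isUnit]

theorem LCD_iff_GGt_invertible {n k : ℕ}
    (C : Submodule F (Fin n → F)) (hk : Module.finrank F C = k)
    (G : Matrix (Fin k) (Fin n) F) (hG : IsGenMat C G) :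
    C ⊓ dualCode C = ⊥ ↔ IsUnit (G * G.transpose) :=
  LCD_iff_GGt_invertible_general C G hG
end

section
/- Let C1 and C2 be linear codes over F_q of length n with parameters [n, k1, d1]_q and [n, k2, d2]_q forming an ℓ-intersection pair (dim(C1 ∩ C2) = ℓ). Then, taking H1 to be a generator matrix of C1 and H2 a parity-check matrix of C2, rank(H1 · H2^t) = k1 − ℓ; consequently the entanglement-assisted quantum code construction with c = rank(H1·H2^t) applied to the codes C1^⊥ and C2 yields parameters n, logical dimension (n − k1) + k2 − n + c = k2 − ℓ, and c = k1 − ℓ maximally entangled states. -/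
open Matrix

variable {F : Type*} [Field F] [Fintype F]

/-! The rows of `G1 * H2ᵀ` are the images of the rows of `G1` under `x ↦ H2 *ᵥ x`, so its rank is
`dim H2(C1)`. The rows of `H2` span `C2^⊥` and `C2^⊥⊥ = C2`, so the kernel of `x ↦ H2 *ᵥ x` is `C2`;
rank–nullity on `C1` then gives `dim H2(C1) = k1 - dim (C1 ∩ C2) = k1 - ℓ`. -/

section DualCode

variable {K : Type*} [Field K] {n : ℕ}

theorem dualCode_eq_orthogonal (C : Submodule K (Fin n → K)) :
    dualCode C = LinearMap.BilinForm.orthogonal (dotProductBilin K K) C := by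
  ext u
  simp only [LinearMap.BilinForm.mem_orthogonal_iff, dotProductBilin_apply_apply]
  exact forall₂_congr fun c _ => by rw [dotProduct_comm]

theorem nondegenerate_dotProductBilin :
    LinearMap.BilinForm.Nondegenerate (dotProductBilin K K : LinearMap.BilinForm K (Fin n → K)) :=
  ⟨fun x hx => dotProduct_eq_zero x hx,
    fun y hy => dotProduct_eq_zero y fun x => by rw [dotProduct_comm]; exact hy x⟩

theorem isRefl_dotProductBilin :
    LinearMap.BilinForm.IsRefl (dotProductBilin K K : LinearMap.BilinForm K (Fin n → K)) :=
  fun x y h => by rw [dotProductBilin_apply_apply] at h ⊢; rwa [dotProduct_comm]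

theorem dualCode_dualCode (C : Submodule K (Fin n → K)) : dualCode (dualCode C) = C := by
  simp only [dualCode_eq_orthogonal]
  exact LinearMap.BilinForm.orthogonal_orthogonal nondegenerate_dotProductBilin
    isRefl_dotProductBilin C

theorem ker_mulVecLin_eq_dualCode_span {m : ℕ} (H : Matrix (Fin m) (Fin n) K) :
    LinearMap.ker H.mulVecLin = dualCode (Submodule.span K (Set.range H.row)) := by
  ext u
  rw [LinearMap.mem_ker, mulVecLin_apply, funext_iff]
  change _ ↔ Submodule.span K _ ≤ LinearMap.ker (dotProductBilin K K u)
  rw [Submodule.span_le, Set.range_subset_iff]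
  exact forall_congr' fun i => by
    rw [SetLike.mem_coe, LinearMap.mem_ker, dotProductBilin_apply_apply, dotProduct_comm]; rfl

theorem ker_mulVecLin_eq_of_isGenMat_dualCode {m : ℕ} {C : Submodule K (Fin n → K)}
    {H : Matrix (Fin m) (Fin n) K} (hH : IsGenMat (dualCode C) H) :
    LinearMap.ker H.mulVecLin = C := by
  rw [ker_mulVecLin_eq_dualCode_span, Matrix.row, hH.2, dualCode_dualCode]

end DualCode

theorem Submodule.finrank_map_add_finrank_inf_ker {K V W : Type*} [DivisionRing K]
    [AddCommGroup V] [Module K V] [AddCommGroup W] [Module K W]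
    (f : V →ₗ[K] W) (p : Submodule K V) [FiniteDimensional K p] :
    Module.finrank K (p.map f) + Module.finrank K ↥(p ⊓ LinearMap.ker f) = Module.finrank K p := by
  have := LinearMap.finrank_range_add_finrank_ker (f.domRestrict p)
  rwa [LinearMap.range_domRestrict, LinearMap.ker_domRestrict, ← Submodule.finrank_map_subtype_eq,
    Submodule.map_comap_subtype] at this

theorem Matrix.rank_mul_transpose_eq_finrank_map {K : Type*} [Field K] {m k n : ℕ}
    (G : Matrix (Fin k) (Fin n) K) (H : Matrix (Fin m) (Fin n) K) :
    (G * Hᵀ).rank = Module.finrank K ((Submodule.span K (Set.range G.row)).map H.mulVecLin) := by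
  have hrows : (G * Hᵀ).row = H.mulVecLin ∘ G.row := by
    funext i j
    simp [mul_apply, mulVec, dotProduct, mul_comm]
  rw [rank_eq_finrank_span_row, hrows, Set.range_comp, ← Submodule.map_span]

theorem EAQECC_parameters_from_intersection_pair_general {n k1 k2 ℓ m2 : ℕ}
    (C1 C2 : Submodule F (Fin n → F))
    (hk1 : Module.finrank F C1 = k1)
    (hl : Module.finrank F ↥(C1 ⊓ C2) = ℓ)
    (G1 : Matrix (Fin k1) (Fin n) F) (hG1 : IsGenMat C1 G1)
    (H2 : Matrix (Fin m2) (Fin n) F) (hH2 : IsGenMat (dualCode C2) H2) :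
    (G1 * H2.transpose).rank = k1 - ℓ ∧
      ((n : ℤ) - k1) + k2 - n + ((G1 * H2.transpose).rank : ℤ) = (k2 : ℤ) - ℓ := by
  have hrank_nullity := Submodule.finrank_map_add_finrank_inf_ker H2.mulVecLin C1
  rw [ker_mulVecLin_eq_of_isGenMat_dualCode hH2, hl, hk1] at hrank_nullity
  have hrank : (G1 * H2ᵀ).rank = k1 - ℓ := by
    rw [Matrix.rank_mul_transpose_eq_finrank_map, Matrix.row, hG1.2]
    omega
  have hℓ : ℓ ≤ k1 := by omega
  refine ⟨hrank, ?_⟩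
  rw [hrank, Nat.cast_sub hℓ]
  ring

theorem EAQECC_parameters_from_intersection_pair {n k1 k2 ℓ m2 : ℕ}
    (C1 C2 : Submodule F (Fin n → F))
    (hk1 : Module.finrank F C1 = k1) (hk2 : Module.finrank F C2 = k2)
    (hl : Module.finrank F ↥(C1 ⊓ C2) = ℓ)
    (G1 : Matrix (Fin k1) (Fin n) F) (hG1 : IsGenMat C1 G1)
    (H2 : Matrix (Fin m2) (Fin n) F) (hH2 : IsGenMat (dualCode C2) H2) :
    (G1 * H2.transpose).rank = k1 - ℓ ∧
      ((n : ℤ) - k1) + k2 - n + ((G1 * H2.transpose).rank : ℤ) = (k2 : ℤ) - ℓ :=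
  EAQECC_parameters_from_intersection_pair_general C1 C2 hk1 hl G1 hG1 H2 hH2
end
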